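/- arXiv:1608.00191 — 7 statements merged into one kernel-verified Lean document; each statement's English description precedes it below -/
import Mathlib

section
/- Fix integers n, k, t with 0 < k < n, set r := n − k, assume r ∣ n, set s := n / r and ℓ := r^t, and assume 1 ≤ t ≤ s − 1. Then there exists a finite field B and a B-linear subspace C of the space of maps Fin n → Fin ℓ → B (codewords consisting of n blocks of ℓ symbols each) such that: (i) the B-dimension of C equals k·ℓ; (ii) (MDS property) for every subset S of Fin n with |S| = k, any two elements c, c′ of C satisfying c j = c′ j for all j ∈ S are equal; and (iii) (repair-by-transfer with near-optimal bandwidth) for every i ∈ Fin n there exists D : Fin n → Finset (Fin ℓ) with D i = ∅ and t · (∑_j |D j|) ≤ (t+1)·(n−1)·r^(t−1), such that any two elements c, c′ of C satisfying c j y = c′ j y for all j and all y ∈ D j also satisfy c i = c′ i. -/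
/-!
Nodes are pairs `(H, j)` of a group `H < s` and a position `j < r`, the `ℓ = r ^ t` layers are
maps `a : Fin t → Fin r`, and group `H` is coupled along the coordinate `χ H = H mod t`. The
uncoupled code is a Reed–Solomon code of dimension `k = (s - 1) r` in every layer. In the coupled
code the symbol `((H, j), a)` with `j ≠ a (χ H)` becomes `u + γ u'`, where `u'` is the uncoupled
value of its partner `((H, a (χ H)), a[χ H ↦ j])`; partnership is an involution.

MDS: for every `k`-set of nodes, the determinant of the restricted encoding is a polynomial in `γ`
of degree at most `k ℓ`, nonzero at `γ = 0` because Reed–Solomon codes are MDS. Over a prime field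
larger than the degree of their product, one `γ ∉ {0, 1, -1}` makes all of them nonzero.

Repair of `f = (H₀, j₀)`: every other node sends the `r ^ (t - 1)` layers with `a (χ H₀) = j₀`,
and the at most `(s - 1) / t` nodes `(H, j₀)` with `H ≠ H₀` and `χ H = χ H₀` send everything. On
those layers every coupled pair outside group `H₀` is then known in full, so `γ ^ 2 ≠ 1` recovers
the uncoupled values at the `k` nodes outside `H₀`, hence at all nodes. Every other symbol of `f` is
coupled to a symbol on those layers, and `γ ≠ 0` recovers it.
-/

open Finset Matrix

namespace CoupledCode

variable {F : Type*} [Field F]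

/-- `((H, j), a)` is the symbol of node `j` of group `H` in layer `a`. -/
abbrev Symbol (ι κ α : Type*) := (ι × α) × (κ → α)

section Coupling

variable {ι κ α : Type*} [DecidableEq κ] (χ : ι → κ)

def partner (x : Symbol ι κ α) : Symbol ι κ α :=
  ((x.1.1, x.2 (χ x.1.1)), Function.update x.2 (χ x.1.1) x.1.2)

def IsCoupled (x : Symbol ι κ α) : Prop := x.1.2 ≠ x.2 (χ x.1.1)

instance [DecidableEq α] : DecidablePred (IsCoupled (α := α) χ) := fun _ => instDecidableNot

@[simp]
lemma partner_partner (x : Symbol ι κ α) : partner χ (partner χ x) = x := by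
  simp [partner]

lemma isCoupled_partner {x : Symbol ι κ α} : IsCoupled χ (partner χ x) ↔ IsCoupled χ x := by
  simp [IsCoupled, partner, ne_comm]

variable [DecidableEq α]

def partnerPart {β : Type*} [Zero β] (u : Symbol ι κ α → β) : Symbol ι κ α → β :=
  fun x => if IsCoupled χ x then u (partner χ x) else 0

def couple {β : Type*} [AddCommGroup β] [Module F β] (γ : F) (u : Symbol ι κ α → β) :
    Symbol ι κ α → β :=
  u + γ • partnerPart χ u

variable {χ}

lemma couple_apply_of_isCoupled (γ : F) (u : Symbol ι κ α → F) {x : Symbol ι κ α}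
    (hx : IsCoupled χ x) : couple χ γ u x = u x + γ * u (partner χ x) := by
  simp [couple, partnerPart, hx]

lemma couple_apply_of_not_isCoupled (γ : F) (u : Symbol ι κ α → F) {x : Symbol ι κ α}
    (hx : ¬IsCoupled χ x) : couple χ γ u x = u x := by
  simp [couple, partnerPart, hx]

lemma couple_mulVec {n : Type*} [Fintype n] (γ : F) (B : Matrix (Symbol ι κ α) n F) (q : n → F) :
    couple χ γ B *ᵥ q = couple χ γ (B *ᵥ q) := by
  ext x
  change ∑ j, (B x j + γ * partnerPart χ B x j) * q j = (B *ᵥ q) x + γ * partnerPart χ (B *ᵥ q) x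
  by_cases hx : IsCoupled χ x <;>
    simp [partnerPart, hx, mulVec, dotProduct, add_mul, mul_assoc, sum_add_distrib, mul_sum]

/-- The coupled values of a pair are `u x + γ u x'` and `u x' + γ u x`, a system with
determinant `1 - γ ^ 2`. -/
lemma eq_zero_of_couple_eq_zero {γ : F} (hγ : γ ^ 2 ≠ 1) {u : Symbol ι κ α → F}
    {x : Symbol ι κ α} (hx : IsCoupled χ x) (h : couple χ γ u x = 0)
    (h' : couple χ γ u (partner χ x) = 0) : u x = 0 := by
  rw [couple_apply_of_isCoupled γ u hx] at h
  rw [couple_apply_of_isCoupled γ u (isCoupled_partner χ |>.mpr hx), partner_partner] at h'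
  have : (1 - γ ^ 2) * u x = 0 := by linear_combination h - γ * h'
  exact (mul_eq_zero.mp this).resolve_left (sub_ne_zero.mpr (Ne.symm hγ))

end Coupling

section Repair

variable {ι κ α : Type*} [DecidableEq ι] [DecidableEq κ] [DecidableEq α] [Fintype κ] [Fintype α]
  (χ : ι → κ)

def download (f v : ι × α) : Finset (κ → α) :=
  {a | v ≠ f ∧ (a (χ f.1) = f.2 ∨ (χ v.1 = χ f.1 ∧ v.2 = f.2))}

variable {χ}

lemma mem_download_and_partner_mem_download {f : ι × α} {x : Symbol ι κ α} (hx : x.1.1 ≠ f.1)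
    (ha : x.2 (χ f.1) = f.2) :
    x.2 ∈ download χ f x.1 ∧ (partner χ x).2 ∈ download χ f (partner χ x).1 := by
  obtain ⟨⟨H, j⟩, a⟩ := x
  have hne : ∀ j', (H, j') ≠ f := fun j' h => hx (by rw [← h])
  by_cases hH : χ H = χ f.1
  · simp_all [download, partner]
  · simp_all [download, partner, Function.update_of_ne (Ne.symm hH)]

lemma apply_eq_zero_of_download {γ : F} (hγ : γ ^ 2 ≠ 1) {u : Symbol ι κ α → F} {f : ι × α}
    (hu : ∀ a, (∀ v : ι × α, v.1 ≠ f.1 → u (v, a) = 0) → ∀ v, u (v, a) = 0)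
    (hc : ∀ v, ∀ a ∈ download χ f v, couple χ γ u (v, a) = 0)
    {a : κ → α} (ha : a (χ f.1) = f.2) (v : ι × α) : u (v, a) = 0 := by
  refine hu a (fun w hw => ?_) v
  obtain ⟨hx, hx'⟩ := mem_download_and_partner_mem_download (x := (w, a)) hw ha
  by_cases hc' : IsCoupled χ (w, a)
  · exact eq_zero_of_couple_eq_zero hγ hc' (hc _ _ hx) (hc _ _ hx')
  · rw [← couple_apply_of_not_isCoupled γ u hc']
    exact hc _ _ hx

theorem couple_apply_eq_zero_of_download {γ : F} (hγ0 : γ ≠ 0) (hγ : γ ^ 2 ≠ 1)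
    {u : Symbol ι κ α → F} {f : ι × α}
    (hu : ∀ a, (∀ v : ι × α, v.1 ≠ f.1 → u (v, a) = 0) → ∀ v, u (v, a) = 0)
    (hc : ∀ v, ∀ a ∈ download χ f v, couple χ γ u (v, a) = 0) (b : κ → α) :
    couple χ γ u (f, b) = 0 := by
  have hlayer := fun {a} => apply_eq_zero_of_download hγ hu hc (a := a)
  have hpartner : (partner χ (f, b)).2 (χ f.1) = f.2 := by simp [partner]
  have hf : u (f, b) = 0 := by
    by_cases hb : b (χ f.1) = f.2
    · exact hlayer hb f
    · have hx : IsCoupled χ (f, b) := Ne.symm hb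
      have hD : (partner χ (f, b)).2 ∈ download χ f (partner χ (f, b)).1 := by
        simp only [download, mem_filter, mem_univ, true_and]
        exact ⟨fun h => hb (congrArg Prod.snd h), Or.inl hpartner⟩
      have h := hc _ _ hD
      rw [couple_apply_of_isCoupled γ u ((isCoupled_partner χ).mpr hx), partner_partner,
        hlayer hpartner, zero_add] at h
      exact (mul_eq_zero.mp h).resolve_left hγ0
  by_cases hx : IsCoupled χ (f, b)
  · rw [couple_apply_of_isCoupled γ u hx, hf, hlayer hpartner, mul_zero, add_zero]
  · rw [couple_apply_of_not_isCoupled γ u hx, hf]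

variable (χ)

lemma card_download_of_ne {f v : ι × α} (hv : v ≠ f) :
    #(download χ f v) = if χ v.1 = χ f.1 ∧ v.2 = f.2 then Fintype.card α ^ Fintype.card κ
      else Fintype.card α ^ (Fintype.card κ - 1) := by
  split_ifs with hmirror
  · rw [download, filter_true_of_mem fun a _ => ⟨hv, Or.inr hmirror⟩, card_univ, Fintype.card_fun]
  · have : download χ f v = {a ∈ Fintype.piFinset fun _ : κ => (univ : Finset α) | a (χ f.1) = f.2}
        := by
      ext a
      simp [download, hv, hmirror]
    rw [this, Fintype.card_filter_piFinset_const_eq_of_mem _ _ (mem_univ _), card_univ]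

variable [Fintype ι]

lemma sum_card_download_le (f : ι × α) :
    ∑ v, #(download χ f v) ≤
      (Fintype.card (ι × α) - 1) * Fintype.card α ^ (Fintype.card κ - 1) +
        #{H | H ≠ f.1 ∧ χ H = χ f.1} *
          ((Fintype.card α - 1) * Fintype.card α ^ (Fintype.card κ - 1)) := by
  set r := Fintype.card α
  set x := r ^ (Fintype.card κ - 1)
  set mirrors : Finset (ι × α) := {v | v ≠ f ∧ χ v.1 = χ f.1 ∧ v.2 = f.2}
  have hfull : r ^ Fintype.card κ = x + (r - 1) * x := by
    have hr : 1 ≤ r := Fintype.card_pos_iff.mpr ⟨f.2⟩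
    have hκ : 1 ≤ Fintype.card κ := Fintype.card_pos_iff.mpr ⟨χ f.1⟩
    rw [← one_add_mul, Nat.add_sub_cancel' hr, ← pow_succ', Nat.sub_add_cancel hκ]
  have hmirrors : #mirrors ≤ #{H | H ≠ f.1 ∧ χ H = χ f.1} := by
    refine card_le_card_of_injOn Prod.fst (fun v hv => ?_) fun v hv w hw h => ?_
    · simp only [mirrors, coe_filter, Set.mem_ofPred_eq, mem_univ, true_and] at hv ⊢
      exact ⟨fun h => hv.1 (Prod.ext h hv.2.2), hv.2.1⟩
    · simp only [mirrors, coe_filter, Set.mem_ofPred_eq, mem_univ, true_and] at hv hw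
      exact Prod.ext h (hv.2.2.trans hw.2.2.symm)
  have hterm : ∀ v, #(download χ f v) ≤
      (if v ∈ univ.erase f then x else 0) + if v ∈ mirrors then (r - 1) * x else 0 := by
    intro v
    by_cases hv : v = f
    · simp [download, hv]
    · rw [card_download_of_ne χ hv, if_pos (mem_erase.mpr ⟨hv, mem_univ v⟩)]
      by_cases hmirror : χ v.1 = χ f.1 ∧ v.2 = f.2
      · rw [if_pos hmirror, if_pos (by simp [mirrors, hv, hmirror])]
        exact hfull.le
      · rw [if_neg hmirror, if_neg (by simp [mirrors, hmirror]), add_zero]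
  refine (sum_le_sum fun v _ => hterm v).trans ?_
  rw [sum_add_distrib, sum_ite_mem, sum_ite_mem, univ_inter, univ_inter, sum_const, sum_const,
    card_erase_of_mem (mem_univ f), card_univ, smul_eq_mul, smul_eq_mul]
  gcongr

theorem mul_sum_card_download_le (f : ι × α) (t : ℕ)
    (hχ : t * #{H | H ≠ f.1 ∧ χ H = χ f.1} ≤ Fintype.card ι - 1) :
    t * ∑ v, #(download χ f v) ≤
      (t + 1) * (Fintype.card ι * Fintype.card α - 1) * Fintype.card α ^ (Fintype.card κ - 1) := by
  have hsum := sum_card_download_le χ f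
  rw [Fintype.card_prod] at hsum
  set s := Fintype.card ι
  set r := Fintype.card α
  set x := r ^ (Fintype.card κ - 1)
  have hs : 1 ≤ s := Fintype.card_pos_iff.mpr ⟨f.1⟩
  have hr : 1 ≤ r := Fintype.card_pos_iff.mpr ⟨f.2⟩
  have hsr : (s - 1) * (r - 1) ≤ s * r - 1 := by
    zify [hs, hr, Nat.one_le_iff_ne_zero.mpr (Nat.mul_ne_zero (by omega) (by omega) : s * r ≠ 0)]
    nlinarith
  calc t * ∑ v, #(download χ f v)
      ≤ t * ((s * r - 1) * x) + t * #{H | H ≠ f.1 ∧ χ H = χ f.1} * ((r - 1) * x) := by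
        exact (Nat.mul_le_mul_left t hsum).trans_eq (by ring)
    _ ≤ t * ((s * r - 1) * x) + (s - 1) * (r - 1) * x := by
        rw [mul_assoc (s - 1)]
        gcongr
    _ ≤ (t + 1) * (s * r - 1) * x := by nlinarith

end Repair

lemma mul_card_filter_mod_eq_le (s t : ℕ) (H₀ : Fin s) :
    t * #{H : Fin s | H ≠ H₀ ∧ (H : ℕ) % t = H₀ % t} ≤ s - 1 := by
  set cls : Finset (Fin s) := {H | (H : ℕ) % t = H₀ % t}
  have hcls : #cls ≤ (s - 1) / t + 1 := by
    refine (card_le_card_of_injOn (fun H : Fin s => (H : ℕ) / t) (t := range ((s - 1) / t + 1))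
      (fun H _ => ?_) fun H hH H' hH' h => ?_).trans_eq (card_range _)
    · simpa [Nat.lt_succ_iff] using Nat.div_le_div_right (Nat.le_sub_one_of_lt H.2)
    · simp only [cls, coe_filter, Set.mem_ofPred_eq, mem_univ, true_and] at hH hH'
      simp only at h
      exact Fin.ext (by rw [← Nat.div_add_mod H t, ← Nat.div_add_mod H' t, h, hH, hH'])
  have herase : ({H | H ≠ H₀ ∧ (H : ℕ) % t = H₀ % t} : Finset (Fin s)) = cls.erase H₀ := by
    ext H
    simp [cls]
  rw [herase, card_erase_of_mem (by simp [cls])]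
  exact (Nat.mul_le_mul_left t (Nat.sub_le_of_le_add hcls)).trans (Nat.mul_div_le (s - 1) t)

section Layered

variable {N Λ m : Type*} [DecidableEq Λ]

def layered (G : Matrix N m F) : Matrix (N × Λ) (Λ × m) F :=
  Matrix.of fun x σ => if σ.1 = x.2 then G x.1 σ.2 else 0

variable [Fintype Λ] [Fintype m]

lemma layered_mulVec (G : Matrix N m F) (q : Λ × m → F) (x : N × Λ) :
    (layered G *ᵥ q) x = (G *ᵥ fun d => q (x.2, d)) x.1 := by
  simp [layered, mulVec, dotProduct, Fintype.sum_prod_type, ite_mul]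

lemma layered_rows_determine {G : Matrix N m F} {W : Finset N}
    (hW : ∀ p, (∀ v ∈ W, (G *ᵥ p) v = 0) → p = 0) (q : Λ × m → F)
    (hq : ∀ x ∈ W ×ˢ univ, (layered G *ᵥ q) x = 0) : q = 0 := by
  ext ⟨a, d⟩
  refine congrFun (hW (fun d => q (a, d)) fun v hv => ?_) d
  simpa [layered_mulVec] using hq (v, a) (mem_product.mpr ⟨hv, mem_univ a⟩)

end Layered

lemma rectVandermonde_rows_determine {N : Type*} {ν : N → F} (hν : Function.Injective ν) {k : ℕ}
    {W : Finset N} (hW : k ≤ #W) (p : Fin k → F)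
    (hp : ∀ v ∈ W, (rectVandermonde ν 1 k *ᵥ p) v = 0) : p = 0 := by
  obtain ⟨W', hW'W, hW'⟩ := exists_subset_card_eq hW
  let e : Fin k ≃ W' := (W'.equivFinOfCardEq hW').symm
  refine eq_zero_of_forall_index_sum_pow_mul_eq_zero (f := fun j => ν (e j))
    (hν.comp (Subtype.val_injective.comp e.injective)) fun j => ?_
  simpa [mulVec, dotProduct, rectVandermonde_apply] using hp _ (hW'W (e j).2)

lemma det_submatrix_ne_zero_iff {ρ n : Type*} [Fintype n] [DecidableEq n] (M : Matrix ρ n F)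
    {R : Finset ρ} (e : n ≃ R) :
    (M.submatrix (fun j => (e j : ρ)) id).det ≠ 0 ↔ ∀ q, (∀ x ∈ R, (M *ᵥ q) x = 0) → q = 0 := by
  have key : ∀ q, M.submatrix (fun j => (e j : ρ)) id *ᵥ q = 0 ↔ ∀ x ∈ R, (M *ᵥ q) x = 0 := by
    refine fun q => ⟨fun h x hx => ?_, fun h => funext fun j => h _ (e j).2⟩
    simpa [mulVec] using congrFun h (e.symm ⟨x, hx⟩)
  rw [Ne, ← exists_mulVec_eq_zero_iff]
  simp only [key, not_exists, not_and]
  exact ⟨fun h q hq => by_contra fun hq0 => h q hq0 hq, fun h q hq0 hq => hq0 (h q hq)⟩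

section GenericParameter

variable [Fintype F]

open Polynomial in
/-- `γ ↦ ∏ i, det (B i + γ • A i)` is a polynomial of degree at most `#s * card n` whose
constant term is `∏ i, det (B i) ≠ 0`. -/
lemma exists_notMem_forall_det_add_smul_ne_zero {ι n : Type*} [Fintype n] [DecidableEq n]
    (s : Finset ι) (A B : ι → Matrix n n F) (hB : ∀ i ∈ s, (B i).det ≠ 0) (avoid : Finset F)
    (hF : #avoid + #s * Fintype.card n < Fintype.card F) :
    ∃ γ ∉ avoid, ∀ i ∈ s, (B i + γ • A i).det ≠ 0 := by
  set p : ι → F[X] := fun i => ((X : F[X]) • (A i).map C + (B i).map C).det with hp_def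
  have heval : ∀ i γ, (p i).eval γ = (B i + γ • A i).det := by
    intro i γ
    rw [hp_def, ← coe_evalRingHom, RingHom.map_det]
    congr 1
    ext j j'
    simp only [RingHom.mapMatrix_apply, map_apply, Matrix.add_apply, Matrix.smul_apply,
      smul_eq_mul, coe_evalRingHom, eval_add, eval_mul, eval_X, eval_C]
    ring
  have hp : ∀ i ∈ s, p i ≠ 0 := fun i hi h =>
    hB i hi (by rw [← coeff_det_X_add_C_zero (A i)]; exact congrArg (coeff · 0) h)
  set Q : F[X] := (∏ a ∈ avoid, (X - C a)) * ∏ i ∈ s, p i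
  have hQ : Q ≠ 0 :=
    mul_ne_zero (prod_ne_zero_iff.mpr fun a _ => X_sub_C_ne_zero a) (prod_ne_zero_iff.mpr hp)
  have hdeg : Q.natDegree ≤ #avoid + #s * Fintype.card n := by
    refine natDegree_mul_le.trans (add_le_add (natDegree_finsetProd_X_sub_C_eq_card _ _).le ?_)
    refine (natDegree_prod_le _ _).trans ?_
    simpa using sum_le_card_nsmul s _ _ fun i _ => natDegree_det_X_add_C_le (A i) (B i)
  obtain ⟨γ, hγ⟩ := exists_eval_ne_zero_of_natDegree_lt_card Q hQ
    (by simpa using hdeg.trans_lt hF)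
  simp only [Q, eval_mul, eval_prod, eval_sub, eval_X, eval_C, mul_ne_zero_iff,
    prod_ne_zero_iff, sub_ne_zero, heval] at hγ
  exact ⟨γ, fun h => hγ.1 γ h rfl, hγ.2⟩

lemma exists_notMem_forall_rows_determine {ρ n : Type*} [Fintype n] [DecidableEq n]
    (A B : Matrix ρ n F) (rows : Finset (Finset ρ)) (hcard : ∀ R ∈ rows, #R = Fintype.card n)
    (hB : ∀ R ∈ rows, ∀ q, (∀ x ∈ R, (B *ᵥ q) x = 0) → q = 0) (avoid : Finset F)
    (hF : #avoid + #rows * Fintype.card n < Fintype.card F) :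
    ∃ γ ∉ avoid, ∀ R ∈ rows, ∀ q, (∀ x ∈ R, ((B + γ • A) *ᵥ q) x = 0) → q = 0 := by
  let e : ∀ R : rows, n ≃ (R : Finset ρ) := fun R =>
    Fintype.equivOfCardEq (by rw [Fintype.card_coe, hcard R R.2])
  let rowsOf (M : Matrix ρ n F) (R : rows) : Matrix n n F := M.submatrix (fun j => (e R j : ρ)) id
  obtain ⟨γ, hγ, hdet⟩ := exists_notMem_forall_det_add_smul_ne_zero rows.attach (rowsOf A)
    (rowsOf B) (fun R _ => (det_submatrix_ne_zero_iff B (e R)).mpr (hB R R.2)) avoid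
    (by rwa [card_attach])
  exact ⟨γ, hγ, fun R hR =>
    (det_submatrix_ne_zero_iff (B + γ • A) (e ⟨R, hR⟩)).mp (hdet _ (mem_attach _ _))⟩

end GenericParameter

section Code

variable {ι κ α m : Type*} [Fintype κ] [Fintype α] [Fintype m] [DecidableEq κ] [DecidableEq α]

def coupledGenerator (χ : ι → κ) (γ : F) (G : Matrix (ι × α) m F) :
    Matrix (Symbol ι κ α) ((κ → α) × m) F :=
  couple χ γ (layered G)

lemma coupledGenerator_mulVec (χ : ι → κ) (γ : F) (G : Matrix (ι × α) m F)
    (q : (κ → α) × m → F) : coupledGenerator χ γ G *ᵥ q = couple χ γ (layered G *ᵥ q) :=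
  couple_mulVec γ _ q

variable [Fintype F] [Fintype ι] [DecidableEq ι]

lemma exists_coupledGenerator_rows_determine (χ : ι → κ) (G : Matrix (ι × α) m F)
    (hG : ∀ W : Finset (ι × α), Fintype.card m ≤ #W → ∀ p, (∀ v ∈ W, (G *ᵥ p) v = 0) → p = 0)
    (hF : 3 + (Fintype.card (ι × α)).choose (Fintype.card m) * Fintype.card ((κ → α) × m) <
      Fintype.card F) :
    ∃ γ : F, γ ≠ 0 ∧ γ ^ 2 ≠ 1 ∧ ∀ W : Finset (ι × α), #W = Fintype.card m → ∀ q,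
      (∀ v ∈ W, ∀ a, (coupledGenerator χ γ G *ᵥ q) (v, a) = 0) → q = 0 := by
  classical
  set rows : Finset (Finset (Symbol ι κ α)) :=
    (powersetCard (Fintype.card m) univ).image fun W => W ×ˢ univ
  have hrows : ∀ R ∈ rows, ∃ W : Finset (ι × α), #W = Fintype.card m ∧ R = W ×ˢ univ := by
    simp only [rows, mem_image, mem_powersetCard]
    rintro R ⟨W, ⟨-, hW⟩, rfl⟩
    exact ⟨W, hW, rfl⟩
  have hcard : ∀ R ∈ rows, #R = Fintype.card ((κ → α) × m) := by
    intro R hR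
    obtain ⟨W, hW, rfl⟩ := hrows R hR
    rw [card_product, hW, card_univ, Fintype.card_prod, mul_comm]
  have hB : ∀ R ∈ rows, ∀ q, (∀ x ∈ R, (layered G *ᵥ q) x = 0) → q = 0 := by
    intro R hR
    obtain ⟨W, hW, rfl⟩ := hrows R hR
    exact layered_rows_determine (hG W hW.ge)
  have hF' : #({0, 1, -1} : Finset F) + #rows * Fintype.card ((κ → α) × m) < Fintype.card F := by
    have hrows_card : #rows ≤ (Fintype.card (ι × α)).choose (Fintype.card m) :=
      card_image_le.trans (by rw [card_powersetCard, card_univ])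
    exact (add_le_add card_le_three (Nat.mul_le_mul_right _ hrows_card)).trans_lt hF
  obtain ⟨γ, hγ, hdet⟩ := exists_notMem_forall_rows_determine (partnerPart χ (layered G))
    (layered G) rows hcard hB {0, 1, -1} hF'
  simp only [mem_insert, mem_singleton, not_or] at hγ
  refine ⟨γ, hγ.1, by simpa [sq_eq_one_iff] using hγ.2, fun W hW q hq => ?_⟩
  refine hdet _ (mem_image_of_mem _ (mem_powersetCard.mpr ⟨subset_univ W, hW⟩)) q ?_
  rintro ⟨v, a⟩ hx
  exact hq v (mem_product.mp hx).1 a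

theorem exists_coupled_code (χ : ι → κ) (G : Matrix (ι × α) m F)
    (hG : ∀ W : Finset (ι × α), Fintype.card m ≤ #W → ∀ p, (∀ v ∈ W, (G *ᵥ p) v = 0) → p = 0)
    (hm : Fintype.card m ≤ (Fintype.card ι - 1) * Fintype.card α)
    (hF : 3 + (Fintype.card (ι × α)).choose (Fintype.card m) * Fintype.card ((κ → α) × m) <
      Fintype.card F) :
    ∃ C : Submodule F (Symbol ι κ α → F),
      Module.finrank F C = Fintype.card ((κ → α) × m) ∧
      (∀ W : Finset (ι × α), #W = Fintype.card m →
        ∀ c ∈ C, (∀ v ∈ W, ∀ a, c (v, a) = 0) → c = 0) ∧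
      ∀ f : ι × α, ∀ c ∈ C, (∀ v, ∀ a ∈ download χ f v, c (v, a) = 0) → ∀ b, c (f, b) = 0 := by
  obtain ⟨γ, hγ0, hγ, hrows⟩ := exists_coupledGenerator_rows_determine χ G hG hF
  have hinj : Function.Injective (coupledGenerator χ γ G).mulVecLin := by
    obtain ⟨W, -, hW⟩ := exists_subset_card_eq (s := (univ : Finset (ι × α)))
      (hm.trans (by rw [card_univ, Fintype.card_prod]; gcongr; omega))
    exact (injective_iff_map_eq_zero _).mpr fun q hq =>
      hrows W hW q fun v _ a => congrFun hq (v, a)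
  refine ⟨LinearMap.range (coupledGenerator χ γ G).mulVecLin, ?_, ?_, ?_⟩
  · rw [LinearMap.finrank_range_of_inj hinj, Module.finrank_fintype_fun_eq_card]
  · rintro W hW _ ⟨q, rfl⟩ hc
    rw [hrows W hW q hc, map_zero]
  · rintro f _ ⟨q, rfl⟩ hc
    simp only [mulVecLin_apply, coupledGenerator_mulVec] at hc ⊢
    refine couple_apply_eq_zero_of_download hγ0 hγ (fun a ha v => ?_) hc
    have hW : Fintype.card m ≤ #((univ.erase f.1) ×ˢ (univ : Finset α)) := by
      simpa [card_erase_of_mem] using hm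
    have hq : (fun d => q (a, d)) = 0 := hG _ hW _ fun w hw => by
      simpa [layered_mulVec] using ha w (mem_erase.mp (mem_product.mp hw).1).1
    simp [layered_mulVec, hq]

end Code

section Relabel

variable {N L N' L' : Type*}

def relabel (eN : N ≃ N') (eL : L ≃ L') : (N × L → F) ≃ₗ[F] (N' → L' → F) where
  toFun c j y := c (eN.symm j, eL.symm y)
  invFun c x := c (eN x.1) (eL x.2)
  map_add' _ _ := rfl
  map_smul' _ _ := rfl
  left_inv c := by ext; simp
  right_inv c := by ext; simp

variable (eN : N ≃ N') (eL : L ≃ L') {C : Submodule F (N × L → F)}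

lemma eq_of_mem_map_relabel {k : ℕ}
    (hC : ∀ W : Finset N, #W = k → ∀ c ∈ C, (∀ v ∈ W, ∀ a, c (v, a) = 0) → c = 0)
    (S : Finset N') (hS : #S = k) :
    ∀ c ∈ C.map (relabel eN eL).toLinearMap, ∀ c' ∈ C.map (relabel eN eL).toLinearMap,
      (∀ j ∈ S, c j = c' j) → c = c' := by
  rintro _ ⟨c, hc, rfl⟩ _ ⟨c', hc', rfl⟩ h
  have hW : #(S.map eN.symm.toEmbedding) = k := by rw [card_map, hS]
  refine congrArg _ (sub_eq_zero.mp (hC _ hW _ (C.sub_mem hc hc') fun v hv a => ?_))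
  obtain ⟨j, hj, rfl⟩ := mem_map.mp hv
  simpa [relabel, sub_eq_zero] using congrFun (h j hj) (eL a)

lemma apply_eq_of_mem_map_relabel {f : N} {D : N → Finset L}
    (hC : ∀ c ∈ C, (∀ v, ∀ a ∈ D v, c (v, a) = 0) → ∀ b, c (f, b) = 0) :
    ∀ c ∈ C.map (relabel eN eL).toLinearMap, ∀ c' ∈ C.map (relabel eN eL).toLinearMap,
      (∀ j, ∀ y ∈ (D (eN.symm j)).map eL.toEmbedding, c j y = c' j y) → c (eN f) = c' (eN f) := by
  rintro _ ⟨c, hc, rfl⟩ _ ⟨c', hc', rfl⟩ h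
  funext y
  have hD : ∀ v, ∀ a ∈ D v, (c - c') (v, a) = 0 := fun v a ha => by
    simpa [relabel, sub_eq_zero] using h (eN v) (eL a) (by simpa using ha)
  simpa [relabel, sub_eq_zero] using hC _ (C.sub_mem hc hc') hD (eL.symm y)

end Relabel

theorem exists_coupled_code_fin (s r t : ℕ) (ht : 0 < t) :
    ∃ (B : Type) (_ : Field B) (_ : Fintype B)
      (C : Submodule B (Fin (s * r) → Fin (r ^ t) → B)),
      Module.finrank B C = (s - 1) * r * r ^ t ∧
      (∀ S : Finset (Fin (s * r)), S.card = (s - 1) * r →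
        ∀ c ∈ C, ∀ c' ∈ C, (∀ j ∈ S, c j = c' j) → c = c') ∧
      (∀ i : Fin (s * r), ∃ D : Fin (s * r) → Finset (Fin (r ^ t)),
        D i = ∅ ∧
        t * (∑ j, (D j).card) ≤ (t + 1) * (s * r - 1) * r ^ (t - 1) ∧
        ∀ c ∈ C, ∀ c' ∈ C,
          (∀ j : Fin (s * r), ∀ y ∈ D j, c j y = c' j y) → c i = c' i) := by
  set k := (s - 1) * r
  obtain ⟨p, hp, hprime⟩ := Nat.exists_infinite_primes ((s * r).choose k * (r ^ t * k) + s * r + 4)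
  have : Fact p.Prime := ⟨hprime⟩
  obtain ⟨ν⟩ : Nonempty (Fin s × Fin r ↪ ZMod p) :=
    Function.Embedding.nonempty_of_card_le (by simp; omega)
  let χ : Fin s → Fin t := fun H => ⟨H % t, Nat.mod_lt _ ht⟩
  obtain ⟨C, hdim, hmds, hrepair⟩ := exists_coupled_code χ (rectVandermonde ν 1 k)
    (fun W hW => rectVandermonde_rows_determine ν.injective (by simpa using hW)) (by simp [k])
    (by simp only [Fintype.card_prod, Fintype.card_fin, Fintype.card_fun, ZMod.card]; omega)
  let eN : Fin s × Fin r ≃ Fin (s * r) := finProdFinEquiv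
  let eL : (Fin t → Fin r) ≃ Fin (r ^ t) := finFunctionFinEquiv
  refine ⟨ZMod p, inferInstance, inferInstance, C.map (relabel eN eL).toLinearMap, ?_,
    eq_of_mem_map_relabel eN eL (by simpa using hmds), fun i =>
      ⟨fun j => (download χ (eN.symm i) (eN.symm j)).map eL.toEmbedding, ?_, ?_, ?_⟩⟩
  · rw [LinearEquiv.finrank_map_eq, hdim]
    simp [k, mul_comm]
  · simp [download]
  · simp only [card_map]
    rw [Equiv.sum_comp eN.symm fun v => #(download χ (eN.symm i) v)]
    simpa using mul_sum_card_download_le χ (eN.symm i) t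
      (by simpa [χ, Fin.ext_iff] using mul_card_filter_mod_eq_le s t (eN.symm i).1)
  · simpa using apply_eq_of_mem_map_relabel eN eL (hrepair (eN.symm i))

end CoupledCode

theorem exists_mds_code_near_optimal_repair_general
    (n k t : ℕ) (hkn : k < n)
    (r s ℓ : ℕ) (hr : r = n - k) (hdvd : r ∣ n) (hs : s = n / r)
    (hℓ : ℓ = r ^ t) (ht1 : 1 ≤ t) :
    ∃ (B : Type) (_ : Field B) (_ : Fintype B)
      (C : Submodule B (Fin n → Fin ℓ → B)),
      Module.finrank B C = k * ℓ ∧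
      (∀ S : Finset (Fin n), S.card = k →
        ∀ c ∈ C, ∀ c' ∈ C, (∀ j ∈ S, c j = c' j) → c = c') ∧
      (∀ i : Fin n, ∃ D : Fin n → Finset (Fin ℓ),
        D i = ∅ ∧
        t * (∑ j, (D j).card) ≤ (t + 1) * (n - 1) * r ^ (t - 1) ∧
        ∀ c ∈ C, ∀ c' ∈ C,
          (∀ j : Fin n, ∀ y ∈ D j, c j y = c' j y) → c i = c' i) := by
  have hn : n = s * r := by rw [hs, Nat.div_mul_cancel hdvd]
  have hk : k = (s - 1) * r := by rw [Nat.sub_one_mul, ← hn]; omega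
  subst hn hk hℓ
  exact CoupledCode.exists_coupled_code_fin s r t ht1

/-- Existence of MDS vector codes with sub-packetization level
`ℓ = (n-k)^t` whose every block admits repair-by-transfer with bandwidth at
most `(1 + 1/t)` times the cut-set bound `(n-1)·r^(t-1)`. -/
theorem exists_mds_code_near_optimal_repair
    (n k t : ℕ) (hk : 0 < k) (hkn : k < n)
    (r s ℓ : ℕ) (hr : r = n - k) (hdvd : r ∣ n) (hs : s = n / r)
    (hℓ : ℓ = r ^ t) (ht1 : 1 ≤ t) (hts : t ≤ s - 1) :
    ∃ (B : Type) (_ : Field B) (_ : Fintype B)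
      (C : Submodule B (Fin n → Fin ℓ → B)),
      Module.finrank B C = k * ℓ ∧
      (∀ S : Finset (Fin n), S.card = k →
        ∀ c ∈ C, ∀ c' ∈ C, (∀ j ∈ S, c j = c' j) → c = c') ∧
      (∀ i : Fin n, ∃ D : Fin n → Finset (Fin ℓ),
        D i = ∅ ∧
        t * (∑ j, (D j).card) ≤ (t + 1) * (n - 1) * r ^ (t - 1) ∧
        ∀ c ∈ C, ∀ c' ∈ C,
          (∀ j : Fin n, ∀ y ∈ D j, c j y = c' j y) → c i = c' i) :=
  exists_mds_code_near_optimal_repair_general n k t hkn r s ℓ hr hdvd hs hℓ ht1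
end

section
/- Let L be a field, let r, ℓ, n be positive integers with r ≤ n, and let H, E : Matrix (Fin r × Fin ℓ) (Fin n × Fin ℓ) L be matrices such that (a) for every injective map ι : Fin r → Fin n the block column submatrix H[ι] is invertible, and (b) E ((p,x),(i,y)) = 0 whenever p = 0 (so E has at most (r−1)·ℓ nonzero rows). Let B be a field equipped with an L-algebra structure, and let ρ ∈ B be integral over L with natDegree (minpoly L ρ) > (r−1)·ℓ. Then for every injective map ι : Fin r → Fin n, the block column submatrix ((H.map (algebraMap L B)) + ρ • (E.map (algebraMap L B)))[ι] is invertible. In particular H.map(algebraMap) + ρ • E.map(algebraMap) is an MDS parity-check matrix over B. -/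
/-!
Write `H[ι] + ρ • E[ι]` as the value at `ρ` of the polynomial matrix `X • E[ι] + H[ι]` over `L`.
Its determinant `q ∈ L[X]` has constant term `det H[ι] ≠ 0`, so `q ≠ 0`, and since the block row
`p = 0` of `E[ι]` vanishes, only `(r - 1) ℓ` rows contain `X`, so `deg q ≤ (r - 1) ℓ`. A nonzero
polynomial of degree below that of the minimal polynomial of `ρ` cannot vanish at `ρ`, hence
`det (H[ι] + ρ • E[ι]) = q(ρ) ≠ 0`.
-/

/-- The block column submatrix `M[ι]` of an `r×n` array of `ℓ×ℓ` blocks,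
selecting the block columns indexed by `ι`. -/
def Matrix.blockColSub {F : Type*} {r ℓ n : ℕ}
    (M : Matrix (Fin r × Fin ℓ) (Fin n × Fin ℓ) F) (ι : Fin r → Fin n) :
    Matrix (Fin r × Fin ℓ) (Fin r × Fin ℓ) F :=
  M.submatrix id (fun jy => (ι jy.1, jy.2))

open Finset Polynomial

theorem minpoly.aeval_ne_zero_of_natDegree_lt {L B : Type*} [Field L] [Ring B] [Algebra L B]
    {x : B} {p : L[X]} (hp : p ≠ 0) (hdeg : p.natDegree < (minpoly L x).natDegree) :
    Polynomial.aeval x p ≠ 0 := fun hx =>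
  hdeg.not_ge (natDegree_le_natDegree (minpoly.degree_le_of_ne_zero L x hp hx))

namespace Matrix

variable {n R : Type*} [Fintype n] [DecidableEq n] [CommRing R]

theorem natDegree_det_le_sum_of_natDegree_le (A : Matrix n n R[X]) (d : n → ℕ)
    (h : ∀ i j, (A i j).natDegree ≤ d i) : A.det.natDegree ≤ ∑ i, d i := by
  rw [det_apply']
  refine natDegree_sum_le_of_forall_le _ _ fun σ _ => ?_
  calc (((Equiv.Perm.sign σ : ℤ) : R[X]) * ∏ i, A (σ i) i).natDegree
      ≤ (∏ i, A (σ i) i).natDegree := by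
        refine natDegree_mul_le.trans ?_
        rw [natDegree_intCast, zero_add]
    _ ≤ ∑ i, (A (σ i) i).natDegree := natDegree_prod_le _ _
    _ ≤ ∑ i, d (σ i) := sum_le_sum fun i _ => h (σ i) i
    _ = ∑ i, d i := Equiv.sum_comp σ d

theorem natDegree_det_X_smul_add_C_le_card (N M : Matrix n n R) (s : Finset n)
    (hN : ∀ i ∉ s, ∀ j, N i j = 0) :
    (det ((X : R[X]) • N.map C + M.map C)).natDegree ≤ #s := by
  have hrow : ∀ i j, (((X : R[X]) • N.map C + M.map C) i j).natDegree ≤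
      if i ∈ s then 1 else 0 := by
    intro i j
    split_ifs with hi
    · simp only [add_apply, smul_apply, map_apply, smul_eq_mul]
      compute_degree
    · simp [hN i hi j]
  refine (natDegree_det_le_sum_of_natDegree_le _ _ hrow).trans_eq ?_
  rw [sum_boole, Nat.cast_id, filter_mem_eq_inter, univ_inter]

theorem det_X_smul_add_C_ne_zero [Nontrivial R] (N M : Matrix n n R) (hM : M.det ≠ 0) :
    det ((X : R[X]) • N.map C + M.map C) ≠ 0 := fun h =>
  hM (by rw [← coeff_det_X_add_C_zero N M, h, coeff_zero])

theorem isUnit_map_add_smul_map_of_card_lt_natDegree_minpoly {L B : Type*} [Field L] [Field B]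
    [Algebra L B] (M N : Matrix n n L) (ρ : B) (s : Finset n) (hM : IsUnit M)
    (hN : ∀ i ∉ s, ∀ j, N i j = 0) (hdeg : #s < (minpoly L ρ).natDegree) :
    IsUnit (M.map (algebraMap L B) + ρ • N.map (algebraMap L B)) := by
  set q := det ((X : L[X]) • N.map C + M.map C)
  have hq : q ≠ 0 := det_X_smul_add_C_ne_zero N M ((isUnit_iff_isUnit_det M).mp hM).ne_zero
  have heval : aeval ρ q = (M.map (algebraMap L B) + ρ • N.map (algebraMap L B)).det := by
    rw [AlgHom.map_det, add_comm]
    congr 1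
    ext i j
    simp only [map_apply, add_apply, smul_apply, smul_eq_mul, AlgHom.mapMatrix_apply, map_add,
      map_mul, aeval_X, aeval_C]
  rw [isUnit_iff_isUnit_det, ← heval]
  exact (minpoly.aeval_ne_zero_of_natDegree_lt hq
    ((natDegree_det_X_smul_add_C_le_card N M s hN).trans_lt hdeg)).isUnit

end Matrix

theorem Fin.card_filter_val_ne_zero (r : ℕ) : #{p : Fin r | (p : ℕ) ≠ 0} = r - 1 := by
  cases r with
  | zero => simp
  | succ k => simp [filter_ne', card_erase_of_mem]

theorem perturbed_parityCheck_isMDS_general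
    (L : Type*) [Field L] (r ℓ n : ℕ)
    (H E : Matrix (Fin r × Fin ℓ) (Fin n × Fin ℓ) L)
    (hH : ∀ ι : Fin r → Fin n, Function.Injective ι → IsUnit (H.blockColSub ι))
    (hE : ∀ (p : Fin r) (x : Fin ℓ) (i : Fin n) (y : Fin ℓ),
      (p : ℕ) = 0 → E (p, x) (i, y) = 0)
    (B : Type*) [Field B] [Algebra L B] (ρ : B)
    (hdeg : (minpoly L ρ).natDegree > (r - 1) * ℓ) :
    ∀ ι : Fin r → Fin n, Function.Injective ι →
      IsUnit ((H.map (algebraMap L B) + ρ • E.map (algebraMap L B)).blockColSub ι) := by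
  intro ι hι
  let rows : Finset (Fin r × Fin ℓ) := ({p | (p : ℕ) ≠ 0} : Finset (Fin r)) ×ˢ univ
  have hrows : ∀ x ∉ rows, ∀ y, E.blockColSub ι x y = 0 := fun x hx y =>
    hE x.1 x.2 (ι y.1) y.2 (by simpa [rows] using hx)
  have hcard : #rows = (r - 1) * ℓ := by
    simp [rows, card_product, Fin.card_filter_val_ne_zero]
  exact (H.blockColSub ι).isUnit_map_add_smul_map_of_card_lt_natDegree_minpoly
    (E.blockColSub ι) ρ rows (hH ι hι) hrows (hcard ▸ hdeg)

/-- Perturbing an MDS parity-check matrix `H` (whose perturbation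
matrix `E` vanishes on the block row `p = 0`, hence has at most `(r-1)ℓ`
nonzero rows) by `ρ • E`, where `ρ` is integral over `L` with minimal
polynomial of degree `> (r-1)ℓ`, yields an MDS parity-check matrix. -/
theorem perturbed_parityCheck_isMDS
    (L : Type*) [Field L] (r ℓ n : ℕ) (hr : 0 < r) (hℓ : 0 < ℓ) (hn : 0 < n)
    (hrn : r ≤ n)
    (H E : Matrix (Fin r × Fin ℓ) (Fin n × Fin ℓ) L)
    (hH : ∀ ι : Fin r → Fin n, Function.Injective ι → IsUnit (H.blockColSub ι))
    (hE : ∀ (p : Fin r) (x : Fin ℓ) (i : Fin n) (y : Fin ℓ),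
      (p : ℕ) = 0 → E (p, x) (i, y) = 0)
    (B : Type*) [Field B] [Algebra L B] (ρ : B) (hρ : IsIntegral L ρ)
    (hdeg : (minpoly L ρ).natDegree > (r - 1) * ℓ) :
    ∀ ι : Fin r → Fin n, Function.Injective ι →
      IsUnit ((H.map (algebraMap L B) + ρ • E.map (algebraMap L B)).blockColSub ι) :=
  perturbed_parityCheck_isMDS_general L r ℓ n H E hH hE B ρ hdeg
end

section
/- Let B be a field, let r, ℓ, n be positive integers with r ≤ n, and let H, E : Matrix (Fin r × Fin ℓ) (Fin n × Fin ℓ) B be matrices such that for every injective map ι : Fin r → Fin n the block column submatrix H[ι] is invertible. Then the set {ρ : B | there exists an injective ι : Fin r → Fin n such that the block column submatrix (H + ρ • E)[ι] is not invertible} is finite and has cardinality at most (n choose r) · r · ℓ. -/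
open Polynomial

theorem Function.Injective.exists_perm_comp_eq {α β : Type*} {f g : α → β}
    (hf : Injective f) (hg : Injective g) (h : Set.range f = Set.range g) :
    ∃ e : Equiv.Perm α, g ∘ e = f :=
  ⟨(Equiv.ofInjective f hf).trans ((Equiv.setCongr h).trans (Equiv.ofInjective g hg).symm),
    funext fun a => by simp [Equiv.apply_ofInjective_symm]⟩

theorem Function.Injective.exists_perm_orderEmbOfFin_comp_eq {r n : ℕ} {ι : Fin r → Fin n}
    (hι : Injective ι) :
    ∃ (s : {s : Finset (Fin n) // s.card = r}) (e : Equiv.Perm (Fin r)),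
      s.1.orderEmbOfFin s.2 ∘ e = ι := by
  classical
  have hs : (Finset.univ.image ι).card = r := by
    rw [Finset.card_image_of_injective _ hι, Finset.card_fin]
  refine ⟨⟨_, hs⟩, hι.exists_perm_comp_eq (Finset.orderEmbOfFin _ hs).injective ?_⟩
  simp

namespace Matrix

section Pencil

variable {m : Type*} [Fintype m] [DecidableEq m]

noncomputable def detPencil {R : Type*} [CommRing R] (A B : Matrix m m R) : R[X] :=
  det ((X : R[X]) • B.map C + A.map C)

theorem eval_detPencil {R : Type*} [CommRing R] (A B : Matrix m m R) (ρ : R) :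
    (detPencil A B).eval ρ = det (A + ρ • B) := by
  rw [detPencil, ← coe_evalRingHom, RingHom.map_det]
  congr 1
  ext i j
  simp only [RingHom.mapMatrix_apply, map_apply, add_apply, smul_apply, smul_eq_mul,
    coe_evalRingHom, eval_add, eval_mul, eval_X, eval_C]
  ring

theorem natDegree_detPencil_le {R : Type*} [CommRing R] (A B : Matrix m m R) :
    (detPencil A B).natDegree ≤ Fintype.card m :=
  natDegree_det_X_add_C_le B A

variable {K : Type*} [Field K] {A : Matrix m m K} (B : Matrix m m K)

theorem detPencil_ne_zero (hA : IsUnit A) : detPencil A B ≠ 0 := fun h => by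
  have := eval_detPencil A B 0
  simp_all [isUnit_iff_isUnit_det]

theorem setOf_not_isUnit_add_smul_subset_rootSet (hA : IsUnit A) :
    {ρ : K | ¬IsUnit (A + ρ • B)} ⊆ (detPencil A B).rootSet K := fun ρ hρ => by
  simpa [mem_rootSet, detPencil_ne_zero B hA, eval_detPencil, isUnit_iff_isUnit_det] using hρ

theorem finite_setOf_not_isUnit_add_smul (hA : IsUnit A) :
    {ρ : K | ¬IsUnit (A + ρ • B)}.Finite :=
  (rootSet_finite _ K).subset (setOf_not_isUnit_add_smul_subset_rootSet B hA)

theorem ncard_setOf_not_isUnit_add_smul_le (hA : IsUnit A) :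
    {ρ : K | ¬IsUnit (A + ρ • B)}.ncard ≤ Fintype.card m :=
  calc {ρ : K | ¬IsUnit (A + ρ • B)}.ncard
      ≤ ((detPencil A B).rootSet K).ncard :=
        Set.ncard_le_ncard (setOf_not_isUnit_add_smul_subset_rootSet B hA) (rootSet_finite _ K)
    _ ≤ Fintype.card m := (ncard_rootSet_le _ K).trans (natDegree_detPencil_le A B)

end Pencil

section BlockColumns

variable {r ℓ n : ℕ}

theorem blockColSub_add_smul {R : Type*} [Add R] [Mul R]
    (H E : Matrix (Fin r × Fin ℓ) (Fin n × Fin ℓ) R) (ρ : R) (ι : Fin r → Fin n) :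
    (H + ρ • E).blockColSub ι = H.blockColSub ι + ρ • E.blockColSub ι :=
  rfl

theorem blockColSub_comp_perm {F : Type*} (M : Matrix (Fin r × Fin ℓ) (Fin n × Fin ℓ) F)
    (ι : Fin r → Fin n) (e : Equiv.Perm (Fin r)) :
    M.blockColSub (ι ∘ e) =
      (M.blockColSub ι).submatrix (Equiv.refl _) (e.prodCongr (Equiv.refl _)) :=
  rfl

theorem isUnit_blockColSub_comp_perm {R : Type*} [CommRing R]
    (M : Matrix (Fin r × Fin ℓ) (Fin n × Fin ℓ) R) (ι : Fin r → Fin n) (e : Equiv.Perm (Fin r)) :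
    IsUnit (M.blockColSub (ι ∘ e)) ↔ IsUnit (M.blockColSub ι) := by
  rw [blockColSub_comp_perm, isUnit_submatrix_equiv]

end BlockColumns

end Matrix

theorem bad_perturbations_finite_general
    (B : Type*) [Field B] (r ℓ n : ℕ)
    (H E : Matrix (Fin r × Fin ℓ) (Fin n × Fin ℓ) B)
    (hH : ∀ ι : Fin r → Fin n, Function.Injective ι → IsUnit (H.blockColSub ι)) :
    {ρ : B | ∃ ι : Fin r → Fin n, Function.Injective ι ∧
        ¬ IsUnit ((H + ρ • E).blockColSub ι)}.Finite ∧
    {ρ : B | ∃ ι : Fin r → Fin n, Function.Injective ι ∧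
        ¬ IsUnit ((H + ρ • E).blockColSub ι)}.ncard ≤ Nat.choose n r * r * ℓ := by
  let ι (s : {s : Finset (Fin n) // s.card = r}) : Fin r → Fin n := s.1.orderEmbOfFin s.2
  have hunit (s) : IsUnit (H.blockColSub (ι s)) := hH _ (s.1.orderEmbOfFin s.2).injective
  have hsub : {ρ : B | ∃ ι : Fin r → Fin n, Function.Injective ι ∧
      ¬ IsUnit ((H + ρ • E).blockColSub ι)} ⊆
      ⋃ s, {ρ : B | ¬IsUnit (H.blockColSub (ι s) + ρ • E.blockColSub (ι s))} := by
    rintro ρ ⟨κ, hκ, hρ⟩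
    obtain ⟨s, e, rfl⟩ := hκ.exists_perm_orderEmbOfFin_comp_eq
    rw [Matrix.isUnit_blockColSub_comp_perm, Matrix.blockColSub_add_smul] at hρ
    exact Set.mem_iUnion.2 ⟨s, hρ⟩
  have hfin := Set.finite_iUnion fun s =>
    Matrix.finite_setOf_not_isUnit_add_smul (E.blockColSub (ι s)) (hunit s)
  refine ⟨hfin.subset hsub, ?_⟩
  calc _ ≤ _ := Set.ncard_le_ncard hsub hfin
    _ ≤ _ := Set.ncard_iUnion_le_of_fintype _
    _ ≤ ∑ _s : {s : Finset (Fin n) // s.card = r}, Fintype.card (Fin r × Fin ℓ) :=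
      Finset.sum_le_sum fun s _ =>
        Matrix.ncard_setOf_not_isUnit_add_smul_le (E.blockColSub (ι s)) (hunit s)
    _ = Nat.choose n r * r * ℓ := by simp [mul_assoc]

/-- if `H` is an MDS parity-check matrix, then the set of "bad"
perturbation scalars `ρ` — those for which some block column submatrix of
`H + ρ • E` fails to be invertible — is finite, of cardinality at most
`(n choose r)·r·ℓ`. -/
theorem bad_perturbations_finite
    (B : Type*) [Field B] (r ℓ n : ℕ) (hr : 0 < r) (hℓ : 0 < ℓ) (hn : 0 < n)
    (hrn : r ≤ n)
    (H E : Matrix (Fin r × Fin ℓ) (Fin n × Fin ℓ) B)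
    (hH : ∀ ι : Fin r → Fin n, Function.Injective ι → IsUnit (H.blockColSub ι)) :
    {ρ : B | ∃ ι : Fin r → Fin n, Function.Injective ι ∧
        ¬ IsUnit ((H + ρ • E).blockColSub ι)}.Finite ∧
    {ρ : B | ∃ ι : Fin r → Fin n, Function.Injective ι ∧
        ¬ IsUnit ((H + ρ • E).blockColSub ι)}.ncard ≤ Nat.choose n r * r * ℓ :=
  bad_perturbations_finite_general B r ℓ n H E hH
end

section
/- Let B be a finite field, let r, ℓ, n be positive integers with r ≤ n, and let H, E : Matrix (Fin r × Fin ℓ) (Fin n × Fin ℓ) B be matrices such that for every injective map ι : Fin r → Fin n the block column submatrix H[ι] is invertible. If the cardinality of B satisfies |B| > (n choose r) · r · ℓ + 1, then there exists a nonzero ρ ∈ B such that for every injective ι : Fin r → Fin n the block column submatrix (H + ρ • E)[ι] is invertible; i.e., H + ρ • E is an MDS parity-check matrix. -/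
/-!
For a fixed block column selection `ι`, `ρ ↦ det (H + ρ • E)[ι]` is a polynomial of degree at
most `r ℓ` which does not vanish at `ρ = 0`, so it has at most `r ℓ` roots. Permuting the blocks
of a selection does not affect invertibility, so only the `n choose r` increasing selections
matter. Together with `ρ = 0` they exclude at most `(n choose r) r ℓ + 1` scalars, fewer than
`|B|`.
-/

open Finset Polynomial

theorem Finset.card_filter_strictMono_le {α : Type*} [LinearOrder α] [Fintype α] (r : ℕ) :
    #{κ : Fin r → α | StrictMono κ} ≤ (Fintype.card α).choose r := by
  classical
  rw [← card_univ, ← card_powersetCard]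
  refine card_le_card_of_injOn (fun κ => univ.image κ) (fun κ hκ => ?_)
    (fun κ₁ hκ₁ κ₂ hκ₂ h => ?_)
  · simp only [coe_filter, mem_univ, true_and, Set.mem_ofPred_eq] at hκ
    simp only [mem_coe, mem_powersetCard, subset_univ, true_and]
    rw [card_image_of_injective _ hκ.injective, card_univ, Fintype.card_fin]
  · simp only [coe_filter, mem_univ, true_and, Set.mem_ofPred_eq] at hκ₁ hκ₂
    refine (hκ₁.range_inj hκ₂).mp ?_
    simpa only [coe_image, coe_univ, Set.image_univ] using congrArg ((↑) : Finset α → Set α) h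

theorem Matrix.card_filter_det_add_smul_eq_zero_le {K m : Type*} [CommRing K] [IsDomain K]
    [Fintype K] [DecidableEq K] [Fintype m] [DecidableEq m] {A : Matrix m m K} (hA : IsUnit A)
    (B : Matrix m m K) :
    #{ρ : K | (A + ρ • B).det = 0} ≤ Fintype.card m := by
  set p : K[X] := det ((X : K[X]) • B.map C + A.map C)
  have eval_p (ρ : K) : p.eval ρ = (A + ρ • B).det := by
    rw [← coe_evalRingHom, RingHom.map_det]
    congr 1
    ext i j
    simp only [RingHom.mapMatrix_apply, map_apply, add_apply, smul_apply, coe_evalRingHom,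
      eval_add, eval_mul, eval_X, eval_C, smul_eq_mul]
    ring
  have p_ne_zero : p ≠ 0 := fun h => ((isUnit_iff_isUnit_det A).mp hA).ne_zero <| by
    simpa [h] using (eval_p 0).symm
  calc #{ρ | (A + ρ • B).det = 0}
      ≤ #p.roots.toFinset := card_le_card fun ρ hρ => by
        simpa [p_ne_zero, eval_p] using hρ
    _ ≤ p.natDegree := (Multiset.toFinset_card_le _).trans (card_roots' p)
    _ ≤ Fintype.card m := natDegree_det_X_add_C_le B A

section BlockColSub

variable {F : Type*} {r ℓ n : ℕ}

@[simp]
theorem Matrix.blockColSub_add [Add F] (M N : Matrix (Fin r × Fin ℓ) (Fin n × Fin ℓ) F)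
    (ι : Fin r → Fin n) : (M + N).blockColSub ι = M.blockColSub ι + N.blockColSub ι :=
  rfl

@[simp]
theorem Matrix.blockColSub_smul {R : Type*} [SMul R F] (c : R)
    (M : Matrix (Fin r × Fin ℓ) (Fin n × Fin ℓ) F) (ι : Fin r → Fin n) :
    (c • M).blockColSub ι = c • M.blockColSub ι :=
  rfl

variable [CommRing F]

theorem Matrix.isUnit_blockColSub_comp_perm_s4 (M : Matrix (Fin r × Fin ℓ) (Fin n × Fin ℓ) F)
    (ι : Fin r → Fin n) (σ : Equiv.Perm (Fin r)) :
    IsUnit (M.blockColSub (ι ∘ σ)) ↔ IsUnit (M.blockColSub ι) :=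
  isUnit_submatrix_equiv (A := M.blockColSub ι) (Equiv.refl _) (σ.prodCongr (Equiv.refl _))

theorem Matrix.isUnit_blockColSub_of_strictMono
    {M : Matrix (Fin r × Fin ℓ) (Fin n × Fin ℓ) F}
    (hM : ∀ κ : Fin r → Fin n, StrictMono κ → IsUnit (M.blockColSub κ))
    {ι : Fin r → Fin n} (hι : Function.Injective ι) : IsUnit (M.blockColSub ι) := by
  have sorted : StrictMono (ι ∘ Tuple.sort ι) :=
    (Tuple.monotone_sort ι).strictMono_of_injective (hι.comp (Tuple.sort ι).injective)
  exact (isUnit_blockColSub_comp_perm_s4 M ι _).mp (hM _ sorted)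

end BlockColSub

open Polynomial Matrix in
theorem exists_good_perturbation_general
    (B : Type*) [Field B] [Fintype B] (r ℓ n : ℕ)
    (H E : Matrix (Fin r × Fin ℓ) (Fin n × Fin ℓ) B)
    (hH : ∀ ι : Fin r → Fin n, Function.Injective ι → IsUnit (H.blockColSub ι))
    (hcard : Fintype.card B > Nat.choose n r * r * ℓ + 1) :
    ∃ ρ : B, ρ ≠ 0 ∧ ∀ ι : Fin r → Fin n, Function.Injective ι →
      IsUnit ((H + ρ • E).blockColSub ι) := by
  classical
  set bad : Finset B := insert 0 <| ({κ | StrictMono κ} : Finset (Fin r → Fin n)).biUnion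
    fun κ => {ρ | (H.blockColSub κ + ρ • E.blockColSub κ).det = 0}
  have card_bad : #bad < #(univ : Finset B) := calc
    #bad ≤ #{κ : Fin r → Fin n | StrictMono κ} * (r * ℓ) + 1 := by
      refine (card_insert_le _ _).trans (Nat.add_le_add_right (card_biUnion_le_card_mul _ _ _ ?_) 1)
      intro κ hκ
      simpa using card_filter_det_add_smul_eq_zero_le
        (hH κ (mem_filter.mp hκ).2.injective) (E.blockColSub κ)
    _ ≤ n.choose r * r * ℓ + 1 := by
      rw [mul_assoc]
      gcongr
      simpa using card_filter_strictMono_le (α := Fin n) r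
    _ < #(univ : Finset B) := hcard
  obtain ⟨ρ, -, hρ⟩ := exists_mem_notMem_of_card_lt_card card_bad
  refine ⟨ρ, fun h => hρ (h ▸ mem_insert_self _ _), fun ι hι => ?_⟩
  refine isUnit_blockColSub_of_strictMono (fun κ hκ => ?_) hι
  refine (isUnit_iff_isUnit_det _).mpr (isUnit_iff_ne_zero.mpr fun h => hρ ?_)
  simp only [bad, mem_insert, mem_biUnion, mem_filter, mem_univ, true_and]
  exact Or.inr ⟨κ, hκ, by simpa using h⟩

/-- over a finite field of size greater than `(n choose r)·r·ℓ + 1`,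
some nonzero perturbation scalar `ρ` makes `H + ρ • E` an MDS parity-check
matrix, provided `H` is one. -/
theorem exists_good_perturbation
    (B : Type*) [Field B] [Fintype B] (r ℓ n : ℕ)
    (hr : 0 < r) (hℓ : 0 < ℓ) (hn : 0 < n) (hrn : r ≤ n)
    (H E : Matrix (Fin r × Fin ℓ) (Fin n × Fin ℓ) B)
    (hH : ∀ ι : Fin r → Fin n, Function.Injective ι → IsUnit (H.blockColSub ι))
    (hcard : Fintype.card B > Nat.choose n r * r * ℓ + 1) :
    ∃ ρ : B, ρ ≠ 0 ∧ ∀ ι : Fin r → Fin n, Function.Injective ι →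
      IsUnit ((H + ρ • E).blockColSub ι) :=
  exists_good_perturbation_general B r ℓ n H E hH hcard
end

section
/- Let B be a field, let r, s be positive integers, set n := r·s, let λ : ZMod r × Fin s → B be any function, and let ρ ∈ B with ρ ≠ 0. Say that c : ZMod r × Fin s → ZMod r → B satisfies the constraints if: (Type I) for every x : ZMod r, ∑_{(u,v)} c (u,v) x = 0; and (Type II) for every natural number p with 1 ≤ p ≤ r−1 and every x : ZMod r, ∑_{(u,v)} (λ (u,v))^p · c (u,v) x + ρ · ∑_{v : Fin s} c (x, v) (x + p) = 0 (addition x + p taken in ZMod r). Fix (u*, v*) ∈ ZMod r × Fin s and define the download set D := {((u,v), u*) : (u,v) ≠ (u*,v*)} ∪ {((u*,v), x) : v ≠ v*, x ≠ u*} ⊆ (ZMod r × Fin s) × ZMod r. Then: (i) |D| = (n−1) + (r−1)·(s−1) ≤ 2·(n−1); and (ii) for any c, c′ both satisfying the constraints, if c b x = c′ b x for every (b, x) ∈ D, then c (u*,v*) = c′ (u*,v*). -/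
/-!
The Type I constraint at symbol `us` is a parity check across all blocks, so the one missing
symbol `c (us, vs) us` is recovered from the others. Once the whole `us`-th layer is known, the
Type II constraint with shift `p` at `x = us` determines `ρ · ∑ v, c (us, v) (us + p)`; as
`ρ ≠ 0` and every term but `v = vs` is downloaded, this recovers `c (us, vs) (us + p)` for each
of the `r - 1` symbols `us + p ≠ us`.
-/

/-- The parity constraints of the paper's `(2, n-k, n-1)`-exact-repairable MDS
code with `n = r·s` blocks and sub-packetization level `r`: Type I constraints
and Type II constraints (with perturbation coefficient `ρ`). -/
def SatisfiesConstraints (B : Type*) [Field B] (r s : ℕ) [NeZero r]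
    (lam : ZMod r × Fin s → B) (ρ : B)
    (c : ZMod r × Fin s → ZMod r → B) : Prop :=
  (∀ x : ZMod r, ∑ uv : ZMod r × Fin s, c uv x = 0) ∧
  (∀ p : ℕ, 1 ≤ p → p ≤ r - 1 → ∀ x : ZMod r,
    (∑ uv : ZMod r × Fin s, (lam uv) ^ p * c uv x) +
      ρ * ∑ v : Fin s, c (x, v) (x + (p : ZMod r)) = 0)

/-- The set of downloaded symbol positions for the repair of block `(us, vs)`:
the `us`-th symbol of every other block, together with the symbols `x ≠ us` of
the blocks `(us, v)` with `v ≠ vs`. -/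
def downloadSet (r s : ℕ) [NeZero r] (us : ZMod r) (vs : Fin s) :
    Finset ((ZMod r × Fin s) × ZMod r) :=
  Finset.univ.filter fun q =>
    (q.2 = us ∧ q.1 ≠ (us, vs)) ∨ (q.1.1 = us ∧ q.1.2 ≠ vs ∧ q.2 ≠ us)

open Finset

theorem Fintype.eq_of_sum_eq_of_forall_ne {ι M : Type*} [Fintype ι] [DecidableEq ι]
    [AddCancelCommMonoid M] {f g : ι → M} {a : ι} (h : ∑ i, f i = ∑ i, g i)
    (hne : ∀ i ≠ a, f i = g i) : f a = g a := by
  have hrest : ∑ i ∈ univ.erase a, f i = ∑ i ∈ univ.erase a, g i :=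
    Finset.sum_congr rfl fun i hi => hne i (ne_of_mem_erase hi)
  rw [← add_sum_erase _ _ (mem_univ a), ← add_sum_erase _ g (mem_univ a), hrest] at h
  exact add_right_cancel h

theorem Nat.sub_one_mul_sub_one_le_mul_sub_one (m n : ℕ) : (m - 1) * (n - 1) ≤ m * n - 1 := by
  rcases m with _ | m
  · simp
  rcases n with _ | n
  · simp
  have : (m + 1) * (n + 1) = m * n + m + n + 1 := by ring
  simp only [Nat.add_sub_cancel]
  omega

theorem ZMod.exists_natCast_add_eq_of_ne {r : ℕ} [NeZero r] {x u : ZMod r} (hx : x ≠ u) :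
    ∃ p : ℕ, 1 ≤ p ∧ p ≤ r - 1 ∧ u + (p : ZMod r) = x := by
  refine ⟨(x - u).val, ?_, ?_, by simp⟩
  · exact Nat.one_le_iff_ne_zero.mpr ((ZMod.val_ne_zero _).mpr (sub_ne_zero.mpr hx))
  · exact Nat.le_sub_one_of_lt (ZMod.val_lt _)

section DownloadSet

variable {r s : ℕ} [NeZero r] {us : ZMod r} {vs : Fin s}

theorem downloadSet_eq_union :
    downloadSet r s us vs =
      (univ.erase (us, vs)) ×ˢ {us} ∪ ({us} ×ˢ univ.erase vs) ×ˢ univ.erase us := by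
  ext ⟨⟨u, v⟩, x⟩
  simp only [downloadSet, mem_filter, mem_univ, true_and, mem_union, mem_product, mem_erase,
    mem_singleton]
  tauto

theorem card_downloadSet :
    (downloadSet r s us vs).card = (r * s - 1) + (r - 1) * (s - 1) := by
  have hdisj : Disjoint ((univ.erase (us, vs)) ×ˢ ({us} : Finset (ZMod r)))
      (({us} ×ˢ univ.erase vs) ×ˢ univ.erase us) := by
    rw [disjoint_left]
    rintro ⟨⟨u, v⟩, x⟩ h1 h2
    simp only [mem_product, mem_singleton, mem_erase] at h1 h2
    exact h2.2.1 h1.2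
  rw [downloadSet_eq_union, card_union_of_disjoint hdisj]
  simp [card_erase_of_mem, ZMod.card, mul_comm]

theorem mem_downloadSet_of_ne {b : ZMod r × Fin s} (hb : b ≠ (us, vs)) :
    (b, us) ∈ downloadSet r s us vs := by
  simp [downloadSet, hb]

theorem mem_downloadSet_of_ne_of_ne {v : Fin s} (hv : v ≠ vs) {x : ZMod r} (hx : x ≠ us) :
    ((us, v), x) ∈ downloadSet r s us vs := by
  simp [downloadSet, hv, hx]

end DownloadSet

namespace SatisfiesConstraints

variable {B : Type*} [Field B] {r s : ℕ} [NeZero r] {lam : ZMod r × Fin s → B} {ρ : B}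
  {c c' : ZMod r × Fin s → ZMod r → B}

theorem eq_of_forall_ne (hc : SatisfiesConstraints B r s lam ρ c)
    (hc' : SatisfiesConstraints B r s lam ρ c') {u : ZMod r} {a : ZMod r × Fin s}
    (hne : ∀ b ≠ a, c b u = c' b u) : c a u = c' a u :=
  Fintype.eq_of_sum_eq_of_forall_ne (f := (c · u)) ((hc.1 u).trans (hc'.1 u).symm) hne

theorem sum_group_eq_of_forall_eq (hc : SatisfiesConstraints B r s lam ρ c)
    (hc' : SatisfiesConstraints B r s lam ρ c') (hρ : ρ ≠ 0) {u : ZMod r}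
    (hu : ∀ b, c b u = c' b u)
    {p : ℕ} (hp1 : 1 ≤ p) (hp : p ≤ r - 1) :
    ∑ v, c (u, v) (u + p) = ∑ v, c' (u, v) (u + p) := by
  have h := hc.2 p hp1 hp u
  have h' := hc'.2 p hp1 hp u
  simp only [hu] at h
  exact mul_left_cancel₀ hρ (add_left_cancel (h.trans h'.symm))

end SatisfiesConstraints

theorem repair_by_transfer_twice_cut_set_general
    (B : Type*) [Field B] (r s : ℕ) [NeZero r]
    (lam : ZMod r × Fin s → B) (ρ : B) (hρ : ρ ≠ 0)
    (us : ZMod r) (vs : Fin s) :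
    ((downloadSet r s us vs).card = (r * s - 1) + (r - 1) * (s - 1) ∧
      (downloadSet r s us vs).card ≤ 2 * (r * s - 1)) ∧
    (∀ c c' : ZMod r × Fin s → ZMod r → B,
      SatisfiesConstraints B r s lam ρ c → SatisfiesConstraints B r s lam ρ c' →
      (∀ b x, (b, x) ∈ downloadSet r s us vs → c b x = c' b x) →
      c (us, vs) = c' (us, vs)) := by
  refine ⟨⟨card_downloadSet, ?_⟩, fun c c' hc hc' hD => ?_⟩
  · rw [card_downloadSet, two_mul]
    exact Nat.add_le_add_left (Nat.sub_one_mul_sub_one_le_mul_sub_one r s) _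
  have hlayer : ∀ b, c b us = c' b us := by
    have hne : ∀ b ≠ (us, vs), c b us = c' b us := fun b hb => hD _ _ (mem_downloadSet_of_ne hb)
    intro b
    by_cases hb : b = (us, vs)
    · exact hb ▸ hc.eq_of_forall_ne hc' hne
    · exact hne b hb
  funext x
  by_cases hx : x = us
  · subst hx
    exact hlayer _
  obtain ⟨p, hp1, hp, rfl⟩ := ZMod.exists_natCast_add_eq_of_ne hx
  exact Fintype.eq_of_sum_eq_of_forall_ne (f := fun v => c (us, v) (us + p))
    (hc.sum_group_eq_of_forall_eq hc' hρ hlayer hp1 hp)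
    fun v hv => hD _ _ (mem_downloadSet_of_ne_of_ne hv hx)

/-- the download set has cardinality
`(n-1) + (r-1)(s-1) ≤ 2(n-1)` (with `n = r·s`), and any codeword satisfying
the constraints has its block `(us, vs)` determined by the downloaded
symbols. -/
theorem repair_by_transfer_twice_cut_set
    (B : Type*) [Field B] (r s : ℕ) [NeZero r] (hs : 0 < s)
    (lam : ZMod r × Fin s → B) (ρ : B) (hρ : ρ ≠ 0)
    (us : ZMod r) (vs : Fin s) :
    ((downloadSet r s us vs).card = (r * s - 1) + (r - 1) * (s - 1) ∧
      (downloadSet r s us vs).card ≤ 2 * (r * s - 1)) ∧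
    (∀ c c' : ZMod r × Fin s → ZMod r → B,
      SatisfiesConstraints B r s lam ρ c → SatisfiesConstraints B r s lam ρ c' →
      (∀ b x, (b, x) ∈ downloadSet r s us vs → c b x = c' b x) →
      c (us, vs) = c' (us, vs)) :=
  repair_by_transfer_twice_cut_set_general B r s lam ρ hρ us vs
end

section
/- Let B be a field, let r, s, t be positive integers, set n := r·s, let λ : ZMod r × Fin s → B be any function, and let ρ ∈ B with ρ ≠ 0. Define a : Fin s → Fin t by a v := v mod t (0-based indices). Say that c : ZMod r × Fin s → (Fin t → ZMod r) → B satisfies the constraints if: (Type I) for every x : Fin t → ZMod r, ∑_{(u,v)} c (u,v) x = 0; and (Type II) for every natural number p with 1 ≤ p ≤ r−1 and every x : Fin t → ZMod r, ∑_{(u,v)} (λ (u,v))^p · c (u,v) x + ρ · ∑_{v : Fin s} c (x (a v), v) (Function.update x (a v) (x (a v) + p)) = 0. Fix (u*, v*) ∈ ZMod r × Fin s, set a* := a v*, and define D := {((u,v), x) : x a* = u* and (u,v) ≠ (u*,v*)} ∪ {((u*,v), x) : v ≠ v*, a v = a*, and x a* ≠ u*}. Then: (i) |D| ≤ (n−1)·r^(t−1)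 + (r−1)·r^(t−1)·(s / t), where s / t is integer (floor) division; and (ii) for any c, c′ both satisfying the constraints, if c b x = c′ b x for every (b, x) ∈ D, then c (u*,v*) = c′ (u*,v*). -/
/-!
Block `(u*, v*)` is recovered in two rounds. On the hyperplane `x a* = u*` every other block is
downloaded, so the Type I constraint at `x` yields `c (u*, v*) x`. For `y a* = u* + p` with
`p ≠ 0`, take the Type II constraint with exponent `p` at `x = y[a* ↦ u*]`: its first sum now
involves only known symbols, and, as `ρ ≠ 0`, so does its perturbation sum, each of whose terms
other than `c (u*, v*) y` is downloaded. The bandwidth count is `(n - 1) r^(t-1)` symbols on the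
hyperplane plus `(r - 1) r^(t-1)` for each of the at most `⌊s/t⌋` other blocks `(u*, v)` with
`a v = a*`.
-/

/-- The group-coordinate assignment `a v := v mod t` (0-based). -/
def aIdx (s t : ℕ) (ht : 0 < t) (v : Fin s) : Fin t :=
  ⟨v.1 % t, Nat.mod_lt _ ht⟩

/-- The parity constraints of the paper's general
`(1 + 1/t, (n-k)^t, n-1)`-exact-repairable MDS code with `n = r·s` blocks and
sub-packetization level `r^t`: Type I constraints and Type II constraints
(with perturbation coefficient `ρ`). -/
def SatisfiesConstraintsT (B : Type*) [Field B] (r s t : ℕ) [NeZero r]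
    (ht : 0 < t) (lam : ZMod r × Fin s → B) (ρ : B)
    (c : ZMod r × Fin s → (Fin t → ZMod r) → B) : Prop :=
  (∀ x : Fin t → ZMod r, ∑ uv : ZMod r × Fin s, c uv x = 0) ∧
  (∀ p : ℕ, 1 ≤ p → p ≤ r - 1 → ∀ x : Fin t → ZMod r,
    (∑ uv : ZMod r × Fin s, (lam uv) ^ p * c uv x) +
      ρ * ∑ v : Fin s,
        c (x (aIdx s t ht v), v)
          (Function.update x (aIdx s t ht v) (x (aIdx s t ht v) + (p : ZMod r)))
      = 0)

/-- The set of downloaded symbol positions for the repair of block `(us, vs)`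
in the general construction. -/
def downloadSetT (r s t : ℕ) [NeZero r] (ht : 0 < t)
    (us : ZMod r) (vs : Fin s) :
    Finset ((ZMod r × Fin s) × (Fin t → ZMod r)) :=
  Finset.univ.filter fun q =>
    (q.2 (aIdx s t ht vs) = us ∧ q.1 ≠ (us, vs)) ∨
    (q.1.1 = us ∧ q.1.2 ≠ vs ∧ aIdx s t ht q.1.2 = aIdx s t ht vs ∧
      q.2 (aIdx s t ht vs) ≠ us)

open Finset

section Counting

variable {ι κ : Type*} [Fintype ι] [DecidableEq ι] [Fintype κ] [DecidableEq κ]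

theorem card_filter_apply_eq (i : ι) (u : κ) :
    #{f : ι → κ | f i = u} = Fintype.card κ ^ (Fintype.card ι - 1) := by
  simpa [Fintype.piFinset_univ] using
    Fintype.card_filter_piFinset_const_eq_of_mem (univ : Finset κ) i (mem_univ u)

theorem card_filter_apply_ne (i : ι) (u : κ) :
    #{f : ι → κ | f i ≠ u} =
      (Fintype.card κ - 1) * Fintype.card κ ^ (Fintype.card ι - 1) := by
  have hsplit := card_filter_add_card_filter_not (s := (univ : Finset (ι → κ))) (· i = u)
  obtain ⟨n, hn⟩ := Nat.exists_eq_succ_of_ne_zero (Fintype.card_pos_iff.mpr ⟨i⟩).ne'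
  rw [card_filter_apply_eq, card_univ, Fintype.card_fun, hn, Nat.succ_sub_one, pow_succ'] at hsplit
  rw [hn, Nat.succ_sub_one, Nat.sub_mul, one_mul, ← hsplit, Nat.add_sub_cancel_left]

end Counting

theorem card_filter_mod_eq_le (s t k : ℕ) : #{v : Fin s | v.1 % t = k} ≤ s / t + 1 := by
  calc #{v : Fin s | v.1 % t = k} ≤ #(range (s / t + 1)) := by
        refine card_le_card_of_injOn (fun v => v.1 / t) (fun v _ => ?_) fun v hv w hw hvw => ?_
        · simpa [Nat.lt_succ_iff] using Nat.div_le_div_right v.2.le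
        · simp only [coe_filter, mem_univ, true_and, Set.mem_ofPred_eq] at hv hw
          refine Fin.ext ?_
          rw [← Nat.div_add_mod v.1 t, ← Nat.div_add_mod w.1 t, hv, hw]
          exact congrArg (t * · + k) hvw
    _ = s / t + 1 := card_range _

theorem card_filter_aIdx_eq_ne_le {s t : ℕ} (ht : 0 < t) (vs : Fin s) :
    #{v : Fin s | v ≠ vs ∧ aIdx s t ht v = aIdx s t ht vs} ≤ s / t := by
  have hclass : ({v : Fin s | v ≠ vs ∧ aIdx s t ht v = aIdx s t ht vs} : Finset (Fin s))
      = ({v : Fin s | v.1 % t = vs.1 % t} : Finset _).erase vs := by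
    ext v; simp [aIdx, Fin.ext_iff]
  rw [hclass, card_erase_of_mem (by simp)]
  exact Nat.sub_le_of_le_add (card_filter_mod_eq_le s t (vs.1 % t))

theorem ZMod.exists_natCast_eq_of_ne_zero {r : ℕ} [NeZero r] {z : ZMod r} (hz : z ≠ 0) :
    ∃ p : ℕ, 1 ≤ p ∧ p ≤ r - 1 ∧ (p : ZMod r) = z :=
  ⟨z.val, Nat.one_le_iff_ne_zero.mpr ((ZMod.val_ne_zero z).mpr hz),
    Nat.le_sub_one_of_lt (ZMod.val_lt z), ZMod.natCast_zmod_val z⟩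

section Repair

variable {B : Type*} [Field B] {r s t : ℕ} [NeZero r] {ht : 0 < t}
  {lam : ZMod r × Fin s → B} {ρ : B} {us : ZMod r} {vs : Fin s}

theorem card_downloadSetT_le :
    #(downloadSetT r s t ht us vs) ≤
      (r * s - 1) * r ^ (t - 1) + (r - 1) * r ^ (t - 1) * (s / t) := by
  set a := aIdx s t ht vs
  have hsub : downloadSetT r s t ht us vs ⊆
      (({b | b ≠ (us, vs)} : Finset _) ×ˢ ({x | x a = us} : Finset (Fin t → ZMod r))) ∪
        (({us} ×ˢ ({v | v ≠ vs ∧ aIdx s t ht v = a} : Finset _)) ×ˢ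
          ({x | x a ≠ us} : Finset (Fin t → ZMod r))) := by
    intro q hq
    simp only [downloadSetT, mem_filter, mem_univ, true_and] at hq
    obtain ⟨⟨u, v⟩, x⟩ := q
    simp only [mem_union, mem_product, mem_filter, mem_univ, true_and, mem_singleton]
    tauto
  have hblocks : #({b | b ≠ (us, vs)} : Finset (ZMod r × Fin s)) = r * s - 1 := by
    rw [filter_ne', card_erase_of_mem (mem_univ _), card_univ, Fintype.card_prod, ZMod.card,
      Fintype.card_fin]
  calc #(downloadSetT r s t ht us vs)
      ≤ (r * s - 1) * r ^ (t - 1) + 1 * (s / t) * ((r - 1) * r ^ (t - 1)) := by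
        refine (card_le_card hsub).trans ((card_union_le _ _).trans ?_)
        simp only [card_product, card_singleton, hblocks, card_filter_apply_eq,
          card_filter_apply_ne, ZMod.card, Fintype.card_fin]
        gcongr
        exact card_filter_aIdx_eq_ne_le ht vs
    _ = (r * s - 1) * r ^ (t - 1) + (r - 1) * r ^ (t - 1) * (s / t) := by ring

theorem mem_downloadSetT_of_apply_eq {b : ZMod r × Fin s} {x : Fin t → ZMod r}
    (hx : x (aIdx s t ht vs) = us) (hb : b ≠ (us, vs)) :
    (b, x) ∈ downloadSetT r s t ht us vs := by
  simp [downloadSetT, hx, hb]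

theorem mem_downloadSetT_of_apply_ne {v : Fin s} {x : Fin t → ZMod r} (hv : v ≠ vs)
    (ha : aIdx s t ht v = aIdx s t ht vs) (hx : x (aIdx s t ht vs) ≠ us) :
    ((us, v), x) ∈ downloadSetT r s t ht us vs := by
  simp [downloadSetT, hx, hv, ha]

/-- These are the positions read by the perturbation sum of a Type II constraint at `x`. -/
theorem shifted_mem_downloadSetT {x : Fin t → ZMod r} (hx : x (aIdx s t ht vs) = us)
    {p : ZMod r} (hp : p ≠ 0) {v : Fin s} (hv : v ≠ vs) :
    ((x (aIdx s t ht v), v), Function.update x (aIdx s t ht v) (x (aIdx s t ht v) + p)) ∈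
      downloadSetT r s t ht us vs := by
  by_cases ha : aIdx s t ht v = aIdx s t ht vs
  · rw [ha, hx]
    exact mem_downloadSetT_of_apply_ne hv ha (by simpa)
  · refine mem_downloadSetT_of_apply_eq ?_ fun h => hv (congrArg Prod.snd h)
    rwa [Function.update_of_ne (Ne.symm ha)]

theorem SatisfiesConstraintsT.sub {c c' : ZMod r × Fin s → (Fin t → ZMod r) → B}
    (hc : SatisfiesConstraintsT B r s t ht lam ρ c)
    (hc' : SatisfiesConstraintsT B r s t ht lam ρ c') :
    SatisfiesConstraintsT B r s t ht lam ρ (c - c') := by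
  refine ⟨fun x => ?_, fun p hp1 hp2 x => ?_⟩
  · simp [sum_sub_distrib, hc.1 x, hc'.1 x]
  · simp only [Pi.sub_apply, mul_sub, sum_sub_distrib]
    linear_combination hc.2 p hp1 hp2 x - hc'.2 p hp1 hp2 x

variable {d : ZMod r × Fin s → (Fin t → ZMod r) → B}

theorem apply_eq_zero_of_apply_eq (hd : SatisfiesConstraintsT B r s t ht lam ρ d)
    (hD : ∀ b x, (b, x) ∈ downloadSetT r s t ht us vs → d b x = 0)
    {x : Fin t → ZMod r} (hx : x (aIdx s t ht vs) = us) : d (us, vs) x = 0 := by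
  rw [← hd.1 x, sum_eq_single (us, vs) (fun b _ hb => ?_) (by simp)]
  exact hD _ _ (mem_downloadSetT_of_apply_eq hx hb)

theorem apply_eq_zero_of_apply_ne (hρ : ρ ≠ 0) (hd : SatisfiesConstraintsT B r s t ht lam ρ d)
    (hD : ∀ b x, (b, x) ∈ downloadSetT r s t ht us vs → d b x = 0)
    {y : Fin t → ZMod r} (hy : y (aIdx s t ht vs) ≠ us) : d (us, vs) y = 0 := by
  set a := aIdx s t ht vs
  obtain ⟨p, hp1, hp2, hp⟩ := ZMod.exists_natCast_eq_of_ne_zero (sub_ne_zero.mpr hy)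
  set x := Function.update y a us
  have hx : x a = us := Function.update_self ..
  have hx_zero : ∀ b, d b x = 0 := fun b => by
    by_cases hb : b = (us, vs)
    · exact hb ▸ apply_eq_zero_of_apply_eq hd hD hx
    · exact hD _ _ (mem_downloadSetT_of_apply_eq hx hb)
  have hshift : Function.update x a (x a + p) = y := by
    rw [hx, hp, add_sub_cancel, Function.update_idem, Function.update_eq_self]
  have hTypeII := hd.2 p hp1 hp2 x
  simp only [hx_zero, mul_zero, sum_const_zero, zero_add, mul_eq_zero, hρ, false_or] at hTypeII
  have hp0 : (p : ZMod r) ≠ 0 := hp ▸ sub_ne_zero.mpr hy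
  rwa [sum_eq_single vs (fun v _ hv => hD _ _ (shifted_mem_downloadSetT hx hp0 hv)) (by simp),
    hshift, hx] at hTypeII

theorem eq_zero_of_forall_mem_downloadSetT (hρ : ρ ≠ 0)
    (hd : SatisfiesConstraintsT B r s t ht lam ρ d)
    (hD : ∀ b x, (b, x) ∈ downloadSetT r s t ht us vs → d b x = 0) : d (us, vs) = 0 := by
  funext y
  by_cases hy : y (aIdx s t ht vs) = us
  · exact apply_eq_zero_of_apply_eq hd hD hy
  · exact apply_eq_zero_of_apply_ne hρ hd hD hy

end Repair

theorem repair_by_transfer_general_general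
    (B : Type*) [Field B] (r s t : ℕ) [NeZero r] (ht : 0 < t)
    (lam : ZMod r × Fin s → B) (ρ : B) (hρ : ρ ≠ 0)
    (us : ZMod r) (vs : Fin s) :
    (downloadSetT r s t ht us vs).card ≤
      (r * s - 1) * r ^ (t - 1) + (r - 1) * r ^ (t - 1) * (s / t) ∧
    (∀ c c' : ZMod r × Fin s → (Fin t → ZMod r) → B,
      SatisfiesConstraintsT B r s t ht lam ρ c →
      SatisfiesConstraintsT B r s t ht lam ρ c' →
      (∀ b x, (b, x) ∈ downloadSetT r s t ht us vs → c b x = c' b x) →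
      c (us, vs) = c' (us, vs)) :=
  ⟨card_downloadSetT_le, fun _ _ hc hc' hagree =>
    sub_eq_zero.mp (eq_zero_of_forall_mem_downloadSetT hρ (hc.sub hc')
      fun b x hbx => sub_eq_zero.mpr (hagree b x hbx))⟩

/-- the download set has cardinality at most
`(n-1)·r^(t-1) + (r-1)·r^(t-1)·⌊s/t⌋` (with `n = r·s`), and any codeword
satisfying the constraints has its block `(us, vs)` determined by the
downloaded symbols. -/
theorem repair_by_transfer_general
    (B : Type*) [Field B] (r s t : ℕ) [NeZero r] (hs : 0 < s) (ht : 0 < t)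
    (lam : ZMod r × Fin s → B) (ρ : B) (hρ : ρ ≠ 0)
    (us : ZMod r) (vs : Fin s) :
    (downloadSetT r s t ht us vs).card ≤
      (r * s - 1) * r ^ (t - 1) + (r - 1) * r ^ (t - 1) * (s / t) ∧
    (∀ c c' : ZMod r × Fin s → (Fin t → ZMod r) → B,
      SatisfiesConstraintsT B r s t ht lam ρ c →
      SatisfiesConstraintsT B r s t ht lam ρ c' →
      (∀ b x, (b, x) ∈ downloadSetT r s t ht us vs → c b x = c' b x) →
      c (us, vs) = c' (us, vs)) :=
  repair_by_transfer_general_general B r s t ht lam ρ hρ us vs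
end

section
/- Let L be a field, let m be a positive integer, let A, E : Matrix (Fin m) (Fin m) L, and let R : Finset (Fin m) be such that E i j = 0 for every i ∉ R and every j. Then the polynomial f(X) := det (A.map Polynomial.C + Polynomial.X • E.map Polynomial.C) ∈ L[X] has natDegree at most R.card, and f.eval 0 = det A. -/
/-! Each term of the Leibniz expansion of the determinant takes one entry from every row, and only the
rows in `R` carry entries of degree one; all other entries are constants. -/

open Polynomial

namespace Matrix

variable {n R : Type*} [Fintype n] [DecidableEq n] [CommRing R]

theorem natDegree_det_le_sum_of_row_le (M : Matrix n n R[X]) (d : n → ℕ)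
    (hM : ∀ i j, (M i j).natDegree ≤ d i) : M.det.natDegree ≤ ∑ i, d i := by
  rw [det_apply]
  refine natDegree_sum_le_of_forall_le _ _ fun σ _ => ?_
  calc (Equiv.Perm.sign σ • ∏ i, M (σ i) i).natDegree
      ≤ (∏ i, M (σ i) i).natDegree := by
        rw [Units.smul_def]; exact natDegree_smul_le _ _
    _ ≤ ∑ i, (M (σ i) i).natDegree := natDegree_prod_le _ _
    _ ≤ ∑ i, d (σ i) := Finset.sum_le_sum fun i _ => hM (σ i) i
    _ = ∑ i, d i := Equiv.sum_comp σ d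

theorem natDegree_det_map_C_add_X_smul_map_C_le (A E : Matrix n n R) (s : Finset n)
    (hE : ∀ i ∉ s, ∀ j, E i j = 0) :
    (A.map C + (X : R[X]) • E.map C).det.natDegree ≤ s.card := by
  have hrow : ∀ i j, ((A.map C + (X : R[X]) • E.map C) i j).natDegree ≤
      if i ∈ s then 1 else 0 := by
    intro i j
    simp only [add_apply, smul_apply, map_apply, smul_eq_mul]
    split_ifs with hi
    · compute_degree
    · simp [hE i hi]
  simpa using natDegree_det_le_sum_of_row_le _ _ hrow

end Matrix

theorem det_perturbation_natDegree_le_general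
    (L : Type*) [Field L] (m : ℕ)
    (A E : Matrix (Fin m) (Fin m) L) (R : Finset (Fin m))
    (hE : ∀ i ∉ R, ∀ j, E i j = 0) :
    (Matrix.det (A.map Polynomial.C + (Polynomial.X : Polynomial L) • E.map Polynomial.C)).natDegree
        ≤ R.card ∧
    (Matrix.det (A.map Polynomial.C + (Polynomial.X : Polynomial L) • E.map Polynomial.C)).eval 0
        = A.det :=
  ⟨Matrix.natDegree_det_map_C_add_X_smul_map_C_le A E R hE, by
    rw [add_comm, ← coeff_zero_eq_eval_zero, coeff_det_X_add_C_zero]⟩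

/-- if the perturbation matrix `E` is supported on the rows in
`R`, then the determinant polynomial `f(X) = det(A + X·E)` has degree at most
`|R|`, and `f(0) = det A`. -/
theorem det_perturbation_natDegree_le
    (L : Type*) [Field L] (m : ℕ) (hm : 0 < m)
    (A E : Matrix (Fin m) (Fin m) L) (R : Finset (Fin m))
    (hE : ∀ i ∉ R, ∀ j, E i j = 0) :
    (Matrix.det (A.map Polynomial.C + (Polynomial.X : Polynomial L) • E.map Polynomial.C)).natDegree
        ≤ R.card ∧
    (Matrix.det (A.map Polynomial.C + (Polynomial.X : Polynomial L) • E.map Polynomial.C)).eval 0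
        = A.det :=
  det_perturbation_natDegree_le_general L m A E R hE
end
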